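/- With notation as in the definition of Ω_{2,p;2,q}(u, 0) via θ₂ and w = e^u: if p and q are both odd, then Ω_{2,p;2,q} = ((p+1)/2)·((q+1)/2)·w^{(p+q)/2+1} / ((1 + (p+q)/2)·(((p+1)/2)!)²·(((q+1)/2)!)²). -/
import Mathlib


/-- Coefficient of z^a in ∂_v θ₂(u,0;z) = ∑_{m≥0} w^m z^{2m}/(m!)². -/
noncomputable def cA (w : ℝ) (a : ℕ) : ℝ :=
  if Even a then w ^ (a / 2) / (Nat.factorial (a / 2) : ℝ) ^ 2 else 0

/-- Coefficient of z^a in ∂_u θ₂(u,0;z) = ∑_{m≥0} m w^m z^{2m−1}/(m!)². -/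
noncomputable def cB (w : ℝ) (a : ℕ) : ℝ :=
  if Odd a then ((a + 1) / 2 : ℕ) * w ^ ((a + 1) / 2) / (Nat.factorial ((a + 1) / 2) : ℝ) ^ 2
  else 0

noncomputable def Fom (w : ℝ) (p q : ℕ) : ℝ :=
  if Even p ∧ Even q then
    w ^ (p/2 + q/2 + 1) /
      (((p/2 + q/2 + 1 : ℕ) : ℝ) * (Nat.factorial (p/2) : ℝ)^2 * (Nat.factorial (q/2) : ℝ)^2)
  else if Odd p ∧ Odd q then
    (((p+1)/2 : ℕ) : ℝ) * (((q+1)/2 : ℕ) : ℝ) * w ^ ((p+1)/2 + (q+1)/2) /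
      ((((p+1)/2 + (q+1)/2 : ℕ) : ℝ) * (Nat.factorial ((p+1)/2) : ℝ)^2
        * (Nat.factorial ((q+1)/2) : ℝ)^2)
  else 0

lemma cA_even (w : ℝ) (a : ℕ) : cA w (2*a) = w ^ a / (Nat.factorial a : ℝ)^2 := by
  simp [cA, Nat.mul_div_cancel_left, even_two_mul]

lemma cA_odd (w : ℝ) (a : ℕ) : cA w (2*a+1) = 0 := by
  simp [cA, Nat.even_add_one, Nat.odd_iff, Nat.mul_mod_right]

lemma cB_even (w : ℝ) (a : ℕ) : cB w (2*a) = 0 := by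
  simp [cB, Nat.odd_iff, Nat.mul_mod_right]

lemma cB_odd (w : ℝ) (a : ℕ) :
    cB w (2*a+1) = ((a+1 : ℕ) : ℝ) * w ^ (a+1) / (Nat.factorial (a+1) : ℝ)^2 := by
  have h : (2*a+1+1)/2 = a+1 := by omega
  simp [cB, h, Nat.odd_iff, Nat.mul_mod_right]

lemma Fom_ee (w : ℝ) (a b : ℕ) :
    Fom w (2*a) (2*b) = w ^ (a + b + 1) /
      (((a + b + 1 : ℕ) : ℝ) * (Nat.factorial a : ℝ)^2 * (Nat.factorial b : ℝ)^2) := by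
  have h1 : (2*a)/2 = a := by omega
  have h2 : (2*b)/2 = b := by omega
  simp [Fom, even_two_mul, h1, h2]

lemma Fom_oo (w : ℝ) (a b : ℕ) :
    Fom w (2*a+1) (2*b+1) = ((a+1 : ℕ) : ℝ) * ((b+1 : ℕ) : ℝ) * w ^ (a + b + 2) /
      (((a + b + 2 : ℕ) : ℝ) * (Nat.factorial (a+1) : ℝ)^2 * (Nat.factorial (b+1) : ℝ)^2) := by
  have h1 : (2*a+1+1)/2 = a+1 := by omega
  have h2 : (2*b+1+1)/2 = b+1 := by omega
  have ho : ¬ (Even (2*a+1) ∧ Even (2*b+1)) := by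
    simp [Nat.even_iff]
  have ho2 : Odd (2*a+1) ∧ Odd (2*b+1) := ⟨⟨a, by ring⟩, ⟨b, by ring⟩⟩
  simp only [Fom, if_neg ho, if_pos ho2, h1, h2]
  norm_num
  rw [show a+1+(b+1) = a+b+2 by ring]
  ring_nf

lemma Fom_oe (w : ℝ) (a b : ℕ) : Fom w (2*a+1) (2*b) = 0 := by
  have : ¬ (Even (2*a+1) ∧ Even (2*b)) := by simp [Nat.even_iff]
  have h2 : ¬ (Odd (2*a+1) ∧ Odd (2*b)) := by simp [Nat.odd_iff]
  simp [Fom, this, h2]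

lemma Fom_eo (w : ℝ) (a b : ℕ) : Fom w (2*a) (2*b+1) = 0 := by
  have : ¬ (Even (2*a) ∧ Even (2*b+1)) := by simp [Nat.even_iff]
  have h2 : ¬ (Odd (2*a) ∧ Odd (2*b+1)) := by simp [Nat.odd_iff]
  simp [Fom, this, h2]

lemma fact_ne (n : ℕ) : (Nat.factorial n : ℝ) ≠ 0 :=
  Nat.cast_ne_zero.mpr (Nat.factorial_ne_zero n)

lemma key (w : ℝ) (Ω : ℕ → ℕ → ℝ)
    (hΩ : ∀ a b : ℕ,
      (if a = 0 then 0 else Ω (a - 1) b) + (if b = 0 then 0 else Ω a (b - 1))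
        = cA w a * cB w b + cB w a * cA w b) :
    ∀ q p, Ω p q = Fom w p q := by
  intro q
  induction q with
  | zero =>
    intro p
    have h := hΩ (p+1) 0
    have hB0 : cB w 0 = 0 := by simp [cB]
    have hA0 : cA w 0 = 1 := by simp [cA]
    simp [hB0, hA0] at h
    rcases Nat.even_or_odd p with hp | hp
    · obtain ⟨a, ha⟩ := hp
      have ha' : p = 2*a := by omega
      subst ha'
      rw [h, show (0:ℕ) = 2*0 by ring, Fom_ee, cB_odd]
      have h1 := fact_ne a
      have h2 : ((a:ℝ)+1) ≠ 0 := by positivity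
      push_cast [Nat.factorial_succ]
      field_simp
      ring
    · obtain ⟨a, ha⟩ := hp
      subst ha
      rw [h, show 2*a+1+1 = 2*(a+1) by ring, cB_even,
        show (0:ℕ) = 2*0 by ring, Fom_oe]
  | succ q ih =>
    intro p
    have h := hΩ (p+1) (q+1)
    simp only [Nat.add_sub_cancel, Nat.succ_ne_zero, if_false] at h
    rw [ih (p+1)] at h
    have h' : Ω p (q+1) = cA w (p+1) * cB w (q+1) + cB w (p+1) * cA w (q+1)
        - Fom w (p+1) q := by linarith
    rcases Nat.even_or_odd p with hp | hp
    · obtain ⟨a, ha⟩ := hp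
      have ha' : p = 2*a := by omega
      subst ha'
      rcases Nat.even_or_odd q with hq | hq
      · obtain ⟨b, hb⟩ := hq
        have hb' : q = 2*b := by omega
        subst hb'
        rw [cA_odd w a, cA_odd w b, Fom_oe w a b] at h'
        rw [h', Fom_eo]
        ring
      · obtain ⟨b, hb⟩ := hq
        subst hb
        rw [show 2*b+1+1 = 2*(b+1) by ring] at h' ⊢
        rw [cA_odd w a, cB_odd w a, cA_even w (b+1), Fom_oo w a b] at h'
        rw [h', Fom_ee]
        have h1 := fact_ne a
        have h2 := fact_ne b
        have h3 : ((a:ℝ)+(b:ℝ)+2) ≠ 0 := by positivity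
        push_cast [Nat.factorial_succ]
        have h4 : ((a:ℝ)+1) ≠ 0 := by positivity
        have h5 : ((b:ℝ)+1) ≠ 0 := by positivity
        rw [show a+(b+1)+1 = a+b+2 by ring]
        field_simp
        ring
    · obtain ⟨a, ha⟩ := hp
      subst ha
      rcases Nat.even_or_odd q with hq | hq
      · obtain ⟨b, hb⟩ := hq
        have hb' : q = 2*b := by omega
        subst hb'
        rw [show 2*a+1+1 = 2*(a+1) by ring, cA_even w (a+1), cB_even w (a+1),
          cB_odd w b, Fom_ee w (a+1) b] at h'
        rw [h', Fom_oo]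
        have h1 := fact_ne a
        have h2 := fact_ne b
        have h3 : ((a:ℝ)+(b:ℝ)+2) ≠ 0 := by positivity
        push_cast [Nat.factorial_succ]
        have h4 : ((a:ℝ)+1) ≠ 0 := by positivity
        have h5 : ((b:ℝ)+1) ≠ 0 := by positivity
        rw [show a+1+b+1 = a+b+2 by ring]
        field_simp
        ring
      · obtain ⟨b, hb⟩ := hq
        subst hb
        rw [show 2*b+1+1 = 2*(b+1) by ring] at h' ⊢
        rw [show 2*a+1+1 = 2*(a+1) by ring, cB_even w (a+1),
          cB_even w (b+1), Fom_eo w (a+1) b] at h'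
        rw [h', Fom_oe]
        ring

/-- if p and q are both odd then
Ω_{2,p;2,q} = ((p+1)/2)((q+1)/2) w^{(p+q)/2+1} /
 ((1+(p+q)/2)·(((p+1)/2)!)²·(((q+1)/2)!)²). -/
theorem stmt13 (w : ℝ) (Ω : ℕ → ℕ → ℝ)
    (hΩ : ∀ a b : ℕ,
      (if a = 0 then 0 else Ω (a - 1) b) + (if b = 0 then 0 else Ω a (b - 1))
        = cA w a * cB w b + cB w a * cA w b) :
    ∀ p q : ℕ, Odd p → Odd q →
      Ω p q = (((p + 1) / 2 : ℕ) : ℝ) * (((q + 1) / 2 : ℕ) : ℝ) * w ^ ((p + q) / 2 + 1) /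
        ((((p + q) / 2 + 1 : ℕ) : ℝ) * (Nat.factorial ((p + 1) / 2) : ℝ) ^ 2
          * (Nat.factorial ((q + 1) / 2) : ℝ) ^ 2) := by
  intro p q hp hq
  obtain ⟨m, rfl⟩ := hp
  obtain ⟨n, rfl⟩ := hq
  rw [key w Ω hΩ, Fom_oo]
  have h1 : (2*m+1+1)/2 = m+1 := by omega
  have h2 : (2*n+1+1)/2 = n+1 := by omega
  have h3 : (2*m+1+(2*n+1))/2 + 1 = m+n+2 := by omega
  rw [h1, h2, h3]
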